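/- arXiv:2102.00710 — 4 statements merged into one kernel-verified Lean document; each statement's English description precedes it below -/
import Mathlib

section
/- For real numbers a, b with a ≠ b and a ≠ −(n−1)b, the n×n matrix 𝓜(a,b) is invertible with inverse 𝓜(a + (n−2)b, −b) / ((a−b)(a + (n−1)b)). -/
/-- `calM n a b` is the n×n matrix with diagonal entries `a` and off-diagonal entries `b`. -/
def calM (n : ℕ) (a b : ℝ) : Matrix (Fin n) (Fin n) ℝ :=
  Matrix.of fun i j => if i = j then a else b

/-!
Write `J` for the all-ones matrix, so `calM n a b = (a - b) • 1 + b • J`. Since `J * J = n • J`,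
matrices of the form `x • 1 + y • J` multiply like elements of `R[J]/(J² - n J)`, and the
product of `calM n a b` with `calM n (a + (n - 2) b) (-b) = (a + (n - 1) b) • 1 - b • J`
has vanishing `J`-coefficient, leaving the scalar `(a - b) (a + (n - 1) b)`.
-/

namespace Matrix

variable {ι R : Type*} [CommRing R]

theorem of_one_mul_of_one [Fintype ι] :
    (of 1 : Matrix ι ι R) * of 1 = (Fintype.card ι : R) • of 1 := by
  ext i j
  simp [mul_apply]

theorem of_ite_eq_smul_one_add_smul_of_one [DecidableEq ι] (a b : R) :
    (of fun i j => if i = j then a else b : Matrix ι ι R) = (a - b) • 1 + b • of 1 := by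
  ext i j
  by_cases hij : i = j <;> simp [hij]

theorem smul_one_add_smul_of_one_mul [Fintype ι] [DecidableEq ι] (x y z w : R) :
    (x • 1 + y • of 1 : Matrix ι ι R) * (z • 1 + w • of 1) =
      (x * z) • 1 + (x * w + y * z + Fintype.card ι * y * w) • of 1 := by
  simp only [add_mul, mul_add, smul_mul_smul_comm, mul_one, one_mul, of_one_mul_of_one]
  module

end Matrix

theorem calM_eq (n : ℕ) (a b : ℝ) : calM n a b = (a - b) • 1 + b • Matrix.of 1 :=
  Matrix.of_ite_eq_smul_one_add_smul_of_one a b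

theorem calM_mul_calM_neg (n : ℕ) (a b : ℝ) :
    calM n a b * calM n (a + ((n : ℝ) - 2) * b) (-b) =
      ((a - b) * (a + ((n : ℝ) - 1) * b)) • 1 := by
  rw [calM_eq, calM_eq, Matrix.smul_one_add_smul_of_one_mul, Fintype.card_fin]
  module

theorem calM_inv_general (n : ℕ) (a b : ℝ) (hab : a ≠ b)
    (hab' : a ≠ -((n : ℝ) - 1) * b) :
    IsUnit (calM n a b) ∧
    (calM n a b)⁻¹ =
      ((a - b) * (a + ((n : ℝ) - 1) * b))⁻¹ • calM n (a + ((n : ℝ) - 2) * b) (-b) := by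
  have hdet : (a - b) * (a + ((n : ℝ) - 1) * b) ≠ 0 :=
    mul_ne_zero (sub_ne_zero.mpr hab) fun h => hab' (by linarith)
  have hone : calM n a b *
      (((a - b) * (a + ((n : ℝ) - 1) * b))⁻¹ • calM n (a + ((n : ℝ) - 2) * b) (-b)) = 1 := by
    rw [Matrix.mul_smul, calM_mul_calM_neg, smul_smul, inv_mul_cancel₀ hdet, one_smul]
  exact ⟨(Matrix.isUnit_iff_isUnit_det _).mpr (Matrix.isUnit_det_of_right_inverse hone),
    Matrix.inv_eq_right_inv hone⟩

theorem calM_inv (n : ℕ) (hn : 1 ≤ n) (a b : ℝ) (hab : a ≠ b)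
    (hab' : a ≠ -((n : ℝ) - 1) * b) :
    IsUnit (calM n a b) ∧
    (calM n a b)⁻¹ =
      ((a - b) * (a + ((n : ℝ) - 1) * b))⁻¹ • calM n (a + ((n : ℝ) - 2) * b) (-b) :=
  calM_inv_general n a b hab hab'
end

section
/- Let a, b > 0 and define f(x) = a·x/(x+a) + b on [0,∞). Then ℓ = (√b·√(4a+b) + b)/2 is the unique nonnegative fixed point of f, and for all x ≥ 0, |f(x) − ℓ| ≤ (a/(a+ℓ))·|x − ℓ|. -/
/-!
The fixed-point equation `a x / (x + a) + b = x` is the quadratic `x² = b x + a b`, whose roots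
have product `-a b < 0`, so it has exactly one nonnegative root, namely `ℓ`. The contraction
estimate comes from the identity
`f x - f y = a² / ((x + a) (y + a)) · (x - y)`, together with `a / (x + a) ≤ 1` for `x ≥ 0`.
-/

lemma div_add_sub_div_add_eq (a b x y : ℝ) (hx : x + a ≠ 0) (hy : y + a ≠ 0) :
    a * x / (x + a) + b - (a * y / (y + a) + b) = a ^ 2 / ((x + a) * (y + a)) * (x - y) := by
  field_simp
  ring

lemma abs_div_add_sub_div_add_le {a x y : ℝ} (b : ℝ) (ha : 0 < a) (hx : 0 ≤ x) (hy : 0 ≤ y) :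
    |a * x / (x + a) + b - (a * y / (y + a) + b)| ≤ a / (a + y) * |x - y| := by
  have hxa : 0 < x + a := by positivity
  have hya : 0 < y + a := by positivity
  rw [div_add_sub_div_add_eq a b x y hxa.ne' hya.ne', abs_mul,
    abs_of_nonneg (by positivity : 0 ≤ a ^ 2 / ((x + a) * (y + a)))]
  refine mul_le_mul_of_nonneg_right ?_ (abs_nonneg _)
  rw [div_le_div_iff₀ (by positivity) (by positivity)]
  nlinarith [mul_nonneg (mul_nonneg ha.le hx) (add_nonneg ha.le hy)]

lemma div_add_eq_self_iff {a x : ℝ} (b : ℝ) (hx : x + a ≠ 0) :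
    a * x / (x + a) + b = x ↔ x ^ 2 = b * x + a * b := by
  rw [← eq_sub_iff_add_eq, div_eq_iff hx]
  constructor <;> intro h <;> linear_combination -h

lemma eq_of_sq_eq_mul_add_of_nonneg {b c x y : ℝ} (hc : 0 < c) (hx : 0 ≤ x) (hy : 0 ≤ y)
    (hxq : x ^ 2 = b * x + c) (hyq : y ^ 2 = b * y + c) : x = y := by
  have hfactor : (x - y) * (x + y - b) = 0 := by linear_combination hxq - hyq
  -- `x (x - b) = c > 0` with `x ≥ 0` forces `x > b`, so the second factor is positive.
  have hxb : b < x := by nlinarith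
  rcases mul_eq_zero.mp hfactor with h | h <;> linarith

lemma add_div_two_sq_eq {b c s : ℝ} (hs : s ^ 2 = b ^ 2 + 4 * c) :
    ((s + b) / 2) ^ 2 = b * ((s + b) / 2) + c := by
  linear_combination hs / 4

theorem fixed_point_contraction (a b : ℝ) (ha : 0 < a) (hb : 0 < b)
    (f : ℝ → ℝ) (hf : ∀ x, f x = a * x / (x + a) + b)
    (ℓ : ℝ) (hℓ : ℓ = (Real.sqrt b * Real.sqrt (4 * a + b) + b) / 2) :
    0 ≤ ℓ ∧ f ℓ = ℓ ∧ (∀ x, 0 ≤ x → f x = x → x = ℓ) ∧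
    (∀ x, 0 ≤ x → |f x - ℓ| ≤ (a / (a + ℓ)) * |x - ℓ|) := by
  have hdisc : (Real.sqrt b * Real.sqrt (4 * a + b)) ^ 2 = b ^ 2 + 4 * (a * b) := by
    rw [mul_pow, Real.sq_sqrt hb.le, Real.sq_sqrt (by positivity)]
    ring
  have hℓq : ℓ ^ 2 = b * ℓ + a * b := hℓ ▸ add_div_two_sq_eq hdisc
  have hℓ0 : 0 ≤ ℓ := by rw [hℓ]; positivity
  have hfix : f ℓ = ℓ := by
    rw [hf, div_add_eq_self_iff b (by positivity)]
    exact hℓq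
  refine ⟨hℓ0, hfix, fun x hx hfx => ?_, fun x hx => ?_⟩
  · rw [hf, div_add_eq_self_iff b (by positivity)] at hfx
    exact eq_of_sq_eq_mul_add_of_nonneg (mul_pos ha hb) hx hℓ0 hfx hℓq
  · calc |f x - ℓ| = |f x - f ℓ| := by rw [hfix]
      _ ≤ a / (a + ℓ) * |x - ℓ| := by
        simpa only [hf] using abs_div_add_sub_div_add_le b ha hx hℓ0
end

section
/- Fix n ≥ 2 and σ_m, σ_d > 0. Define α_0 = n σ_0²/(n−1) ≥ 0 and α_{t+1} = σ_m² α_t / ((n/(n−1)) α_t + σ_m²) + (n/(n−1)) σ_d². Then α_t converges to α_∞ = (σ_d·√(4σ_m² + ((n/(n−1))σ_d)²) + (n/(n−1))σ_d²)/2. -/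
/-!
With `c = n/(n-1)`, the recursion is `α (t+1) = f (α t)` for `f x = a x / (c x + a) + k`,
`a = σm²`, `k = c σd²`. Since `f x - f y = a² (x - y) / ((c x + a)(c y + a))`, the map `f` sends
`[0, ∞)` into `[k, ∞)` and is a contraction there with factor `(a / (c k + a))² < 1`. The claimed
limit is its fixed point in `[k, ∞)`, the positive root of `L² = k L + σd² σm²`.
-/

open Filter Topology

noncomputable def riccatiMap (a c k x : ℝ) : ℝ := a * x / (c * x + a) + k

section riccatiMap

variable {a c k : ℝ}

theorem le_riccatiMap (ha : 0 ≤ a) (hc : 0 ≤ c) {x : ℝ} (hx : 0 ≤ x) : k ≤ riccatiMap a c k x :=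
  le_add_of_nonneg_left (by positivity)

theorem riccatiMap_sub_riccatiMap {x y : ℝ} (hx : c * x + a ≠ 0) (hy : c * y + a ≠ 0) :
    riccatiMap a c k x - riccatiMap a c k y = a ^ 2 * (x - y) / ((c * x + a) * (c * y + a)) := by
  simp only [riccatiMap, add_sub_add_right_eq_sub]
  rw [div_sub_div _ _ hx hy]
  ring

theorem abs_riccatiMap_sub_le (ha : 0 ≤ a) (hc : 0 < c) (hk : 0 < k) {x y : ℝ} (hx : k ≤ x)
    (hy : k ≤ y) : |riccatiMap a c k x - riccatiMap a c k y| ≤ (a / (c * k + a)) ^ 2 * |x - y| := by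
  have hck : 0 < c * k + a := by positivity
  have hkx : c * k + a ≤ c * x + a := by gcongr
  have hky : c * k + a ≤ c * y + a := by gcongr
  have hx' : 0 < c * x + a := hck.trans_le hkx
  have hy' : 0 < c * y + a := hck.trans_le hky
  rw [riccatiMap_sub_riccatiMap hx'.ne' hy'.ne', abs_div, abs_mul,
    abs_of_nonneg (sq_nonneg a), abs_of_pos (mul_pos hx' hy'), mul_div_right_comm, div_pow]
  have hprod : (c * k + a) ^ 2 ≤ (c * x + a) * (c * y + a) := by
    rw [sq]; exact mul_le_mul hkx hky hck.le hx'.le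
  gcongr ?_ * _
  exact div_le_div_of_nonneg_left (sq_nonneg a) (by positivity) hprod

theorem riccatiMap_eq_self {L : ℝ} (hL : c * L ^ 2 = c * k * L + k * a) (h : c * L + a ≠ 0) :
    riccatiMap a c k L = L := by
  unfold riccatiMap
  rw [div_add' _ _ _ h, div_eq_iff h]
  linear_combination -hL

end riccatiMap

theorem tendsto_of_abs_sub_le_mul {u : ℕ → ℝ} {L q : ℝ} (hq0 : 0 ≤ q) (hq1 : q < 1)
    (h : ∀ t, |u (t + 1) - L| ≤ q * |u t - L|) : Tendsto u atTop (𝓝 L) := by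
  have hgeom (t : ℕ) : |u t - L| ≤ q ^ t * |u 0 - L| :=
    le_geom (u := fun t => |u t - L|) hq0 t fun t _ => h t
  have hlim : Tendsto (fun t => q ^ t * |u 0 - L|) atTop (𝓝 0) := by
    simpa using (tendsto_pow_atTop_nhds_zero_of_lt_one hq0 hq1).mul_const |u 0 - L|
  exact tendsto_iff_norm_sub_tendsto_zero.2 (squeeze_zero (fun _ => abs_nonneg _) hgeom hlim)

theorem tendsto_of_riccatiMap_recursion {a c k L : ℝ} (ha : 0 ≤ a) (hc : 0 < c) (hk : 0 < k)
    (hL : riccatiMap a c k L = L) (hkL : k ≤ L) {u : ℕ → ℝ} (hu0 : 0 ≤ u 0)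
    (hu : ∀ t, u (t + 1) = riccatiMap a c k (u t)) : Tendsto u atTop (𝓝 L) := by
  have hnonneg (t : ℕ) : 0 ≤ u t := by
    induction t with
    | zero => exact hu0
    | succ t ih => rw [hu]; exact hk.le.trans (le_riccatiMap ha hc.le ih)
  have hck : 0 < c * k + a := by positivity
  have hq1 : (a / (c * k + a)) ^ 2 < 1 :=
    pow_lt_one₀ (by positivity) ((div_lt_one hck).2 (by linarith [mul_pos hc hk])) two_ne_zero
  rw [← tendsto_add_atTop_iff_nat 1]
  refine tendsto_of_abs_sub_le_mul (by positivity) hq1 fun t => ?_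
  have hkut : k ≤ u (t + 1) := hu t ▸ le_riccatiMap ha hc.le (hnonneg t)
  simpa only [hL, ← hu] using abs_riccatiMap_sub_le ha hc hk hkut hkL

theorem alpha_converges_general (n : ℕ) (hn : 2 ≤ n) (σ0 σm σd : ℝ)
    (hσd : 0 < σd)
    (α : ℕ → ℝ)
    (hα0 : α 0 = (n : ℝ) * σ0 ^ 2 / ((n : ℝ) - 1))
    (hα : ∀ t, α (t + 1) =
      σm ^ 2 * α t / (((n : ℝ) / ((n : ℝ) - 1)) * α t + σm ^ 2)
        + ((n : ℝ) / ((n : ℝ) - 1)) * σd ^ 2) :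
    Tendsto α atTop (nhds
      ((σd * Real.sqrt (4 * σm ^ 2 + (((n : ℝ) / ((n : ℝ) - 1)) * σd) ^ 2)
        + ((n : ℝ) / ((n : ℝ) - 1)) * σd ^ 2) / 2)) := by
  have hn1 : 0 < (n : ℝ) - 1 := by
    have : (2 : ℝ) ≤ n := by exact_mod_cast hn
    linarith
  set c := (n : ℝ) / ((n : ℝ) - 1)
  have hc : 0 < c := div_pos (by linarith) hn1
  set s := Real.sqrt (4 * σm ^ 2 + (c * σd) ^ 2)
  have hs2 : s ^ 2 = 4 * σm ^ 2 + (c * σd) ^ 2 := Real.sq_sqrt (by positivity)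
  have hcs : c * σd ≤ s :=
    (Real.le_sqrt (by positivity) (by positivity)).2 (le_add_of_nonneg_left (by positivity))
  refine tendsto_of_riccatiMap_recursion (k := c * σd ^ 2) (sq_nonneg σm) hc (by positivity)
    (riccatiMap_eq_self ?_ (by positivity)) ?_ (hα0 ▸ div_nonneg (by positivity) hn1.le) hα
  · linear_combination (c * σd ^ 2 / 4) * hs2
  · nlinarith [mul_le_mul_of_nonneg_left hcs hσd.le]

theorem alpha_converges (n : ℕ) (hn : 2 ≤ n) (σ0 σm σd : ℝ)
    (hσ0 : 0 ≤ σ0) (hσm : 0 < σm) (hσd : 0 < σd)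
    (α : ℕ → ℝ)
    (hα0 : α 0 = (n : ℝ) * σ0 ^ 2 / ((n : ℝ) - 1))
    (hα : ∀ t, α (t + 1) =
      σm ^ 2 * α t / (((n : ℝ) / ((n : ℝ) - 1)) * α t + σm ^ 2)
        + ((n : ℝ) / ((n : ℝ) - 1)) * σd ^ 2) :
    Tendsto α atTop (nhds
      ((σd * Real.sqrt (4 * σm ^ 2 + (((n : ℝ) / ((n : ℝ) - 1)) * σd) ^ 2)
        + ((n : ℝ) / ((n : ℝ) - 1)) * σd ^ 2) / 2)) :=
  alpha_converges_general n hn σ0 σm σd hσd α hα0 hα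
end

section
/- Define Var(ρ) = (ρ²σ_m² + σ_d²)/(2ρ − (n/(n−1))ρ²) for ρ ∈ (0,1] (with (n,ρ) ≠ (2,1)). Then Var attains its unique minimum on this interval at ρ★ = (σ_d·√(4σ_m² + ((n/(n−1))σ_d)²) − (n/(n−1))σ_d²)/(2σ_m²). -/
/-!
Write `c = n/(n-1)`. The point `ρ★` is the positive root of `σm² ρ² + c σd² ρ = σd²`, and for
such a root `r` one has the exact decomposition
`(ρ² σm² + σd²) / (2ρ - cρ²) = σd² / r + σd² (ρ - r)² / (r² (2ρ - cρ²))`,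
so on the interval where the denominator is positive the variance exceeds its value `σd² / r`
at `r` by a square. The quadratic gives `σd² (1 - c r) = σm² r² > 0`, hence `r < 1/c ≤ 1`.
-/

open Real

section QuadraticRoot

variable {a b c r : ℝ}

theorem div_sub_div_eq_of_quadratic_root (hr : r ≠ 0) (hroot : a * r ^ 2 + c * b * r = b)
    {ρ : ℝ} (hρ : 2 * ρ - c * ρ ^ 2 ≠ 0) :
    (ρ ^ 2 * a + b) / (2 * ρ - c * ρ ^ 2) - b / r
      = b * (ρ - r) ^ 2 / (r ^ 2 * (2 * ρ - c * ρ ^ 2)) := by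
  rw [div_sub_div _ _ hρ hr, div_eq_div_iff (mul_ne_zero hρ hr) (by positivity)]
  linear_combination (2 * ρ - c * ρ ^ 2) * r * ρ ^ 2 * hroot

theorem div_eq_of_quadratic_root (hr : r ≠ 0) (hroot : a * r ^ 2 + c * b * r = b)
    (hD : 2 * r - c * r ^ 2 ≠ 0) :
    (r ^ 2 * a + b) / (2 * r - c * r ^ 2) = b / r := by
  simpa [sub_eq_zero] using div_sub_div_eq_of_quadratic_root hr hroot hD

theorem div_lt_of_quadratic_root (hb : 0 < b) (hr : 0 < r) (hroot : a * r ^ 2 + c * b * r = b)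
    {ρ : ℝ} (hρ : 0 < 2 * ρ - c * ρ ^ 2) (hρr : ρ ≠ r) :
    b / r < (ρ ^ 2 * a + b) / (2 * ρ - c * ρ ^ 2) := by
  have hgap : 0 < b * (ρ - r) ^ 2 / (r ^ 2 * (2 * ρ - c * ρ ^ 2)) := by
    have : ρ - r ≠ 0 := sub_ne_zero.mpr hρr
    positivity
  rw [← div_sub_div_eq_of_quadratic_root hr.ne' hroot hρ.ne'] at hgap
  linarith

theorem mul_lt_one_of_quadratic_root (ha : 0 < a) (hb : 0 < b) (hr : r ≠ 0)
    (hroot : a * r ^ 2 + c * b * r = b) : c * r < 1 := by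
  have : 0 < b * (1 - c * r) := by
    rw [show b * (1 - c * r) = a * r ^ 2 by linear_combination -hroot]
    positivity
  nlinarith

end QuadraticRoot

section RhoStar

variable {c σm σd : ℝ}

noncomputable def rhoStar (c σm σd : ℝ) : ℝ :=
  (σd * √(4 * σm ^ 2 + (c * σd) ^ 2) - c * σd ^ 2) / (2 * σm ^ 2)

theorem rhoStar_quadratic (hσm : σm ≠ 0) :
    σm ^ 2 * rhoStar c σm σd ^ 2 + c * σd ^ 2 * rhoStar c σm σd = σd ^ 2 := by
  have hs := Real.sq_sqrt (by positivity : 0 ≤ 4 * σm ^ 2 + (c * σd) ^ 2)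
  unfold rhoStar
  generalize √(4 * σm ^ 2 + (c * σd) ^ 2) = s at hs ⊢
  field_simp
  linear_combination σd ^ 2 * hs

theorem rhoStar_pos (hσm : σm ≠ 0) (hσd : 0 < σd) : 0 < rhoStar c σm σd := by
  have hsqrt : c * σd < √(4 * σm ^ 2 + (c * σd) ^ 2) :=
    Real.lt_sqrt_of_sq_lt <| by linarith [(by positivity : 0 < σm ^ 2)]
  have := mul_lt_mul_of_pos_left hsqrt hσd
  unfold rhoStar
  apply div_pos _ (by positivity)
  linarith

end RhoStar

theorem one_le_natCast_div_sub_one {n : ℕ} (hn : 2 ≤ n) : 1 ≤ (n : ℝ) / ((n : ℝ) - 1) := by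
  have hn' : (2 : ℝ) ≤ n := by exact_mod_cast hn
  rw [le_div_iff₀ (by linarith)]
  linarith

/-- `(n - 1)(2ρ - cρ²) = ρ (n (1 - ρ) + (n - 2))`, and both summands vanish only at `(n, ρ) = (2, 1)`. -/
theorem stretch_denominator_pos {n : ℕ} (hn : 2 ≤ n) {ρ : ℝ} (hρ0 : 0 < ρ) (hρ1 : ρ ≤ 1)
    (hne : ¬(n = 2 ∧ ρ = 1)) : 0 < 2 * ρ - (n : ℝ) / ((n : ℝ) - 1) * ρ ^ 2 := by
  have hn' : (2 : ℝ) ≤ n := by exact_mod_cast hn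
  have hn1 : (0 : ℝ) < n - 1 := by linarith
  have hsum : 0 < (n : ℝ) * (1 - ρ) + (n - 2) := by
    rcases hρ1.lt_or_eq with hlt | rfl
    · nlinarith
    · have : n ≠ 2 := fun h => hne ⟨h, rfl⟩
      have : (3 : ℝ) ≤ n := by exact_mod_cast (show 3 ≤ n by omega)
      linarith
  have : 2 * ρ - (n : ℝ) / ((n : ℝ) - 1) * ρ ^ 2 = ρ * ((n : ℝ) * (1 - ρ) + (n - 2)) / (n - 1) := by
    field_simp
    ring
  rw [this]
  positivity

theorem var_min_at_rho_star (n : ℕ) (hn : 2 ≤ n) (σm σd : ℝ)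
    (hσm : 0 < σm) (hσd : 0 < σd)
    (Var : ℝ → ℝ)
    (hVar : ∀ ρ, Var ρ = (ρ ^ 2 * σm ^ 2 + σd ^ 2) /
      (2 * ρ - ((n : ℝ) / ((n : ℝ) - 1)) * ρ ^ 2))
    (ρstar : ℝ)
    (hρstar : ρstar = (σd * Real.sqrt (4 * σm ^ 2 + (((n : ℝ) / ((n : ℝ) - 1)) * σd) ^ 2)
      - ((n : ℝ) / ((n : ℝ) - 1)) * σd ^ 2) / (2 * σm ^ 2)) :
    (0 < ρstar ∧ ρstar ≤ 1 ∧ ¬(n = 2 ∧ ρstar = 1)) ∧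
    ∀ ρ, 0 < ρ → ρ ≤ 1 → ¬(n = 2 ∧ ρ = 1) → ρ ≠ ρstar → Var ρstar < Var ρ := by
  set c : ℝ := (n : ℝ) / ((n : ℝ) - 1)
  change ρstar = rhoStar c σm σd at hρstar
  have hroot : σm ^ 2 * ρstar ^ 2 + c * σd ^ 2 * ρstar = σd ^ 2 :=
    hρstar ▸ rhoStar_quadratic hσm.ne'
  have hpos : 0 < ρstar := hρstar ▸ rhoStar_pos hσm.ne' hσd
  have hcρ : c * ρstar < 1 := mul_lt_one_of_quadratic_root (by positivity) (by positivity)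
    hpos.ne' hroot
  have hlt : ρstar < 1 := by nlinarith [one_le_natCast_div_sub_one hn]
  have hmin : Var ρstar = σd ^ 2 / ρstar := by
    rw [hVar]
    exact div_eq_of_quadratic_root hpos.ne' hroot (by nlinarith)
  refine ⟨⟨hpos, hlt.le, fun h => hlt.ne h.2⟩, fun ρ hρ0 hρ1 hne hρr => ?_⟩
  rw [hmin, hVar]
  exact div_lt_of_quadratic_root (by positivity) hpos hroot
    (stretch_denominator_pos hn hρ0 hρ1 hne) hρr
end
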